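/- arXiv:2111.08949 — 2 statements merged into one kernel-verified Lean document; each statement's English description precedes it below -/
import Mathlib

section
/- Let k, n ∈ ℕ and let λ_1, …, λ_k be positive reals with partial sums σ_r = λ_1+…+λ_r (σ_0 = 0). A sequence (x^0, …, x^k) of points in ℝ^n satisfies ‖x^r − x^l‖_∞ = σ_r − σ_l for all 0 ≤ l < r ≤ k (i.e., is an isometric copy of the baton B(λ_1,…,λ_k) in that order) if and only if the following two conditions hold: (1) there exists a coordinate i ∈ {1,…,n} such that the sequence (x_i^0, …, x_i^k) of i-th coordinates is either a translation of (σ_0, …, σ_k) or a translation of (−σ_0, …, −σ_k); (2) for every coordinate j ∈ {1,…,n} and every r ∈ {1,…,k}, |x_j^r − x_j^{r−1}| ≤ λ_r. -/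
/-!
In the max metric the distance between `xˡ` and `xʳ` is attained at some coordinate, so the
isometry condition for `l = 0`, `r = k` produces a coordinate `i` with `|x_iᵏ − x_i⁰| = σ_k`.
Every coordinate is `σ`-Lipschitz along the baton, hence `x_iʳ − x_i⁰` and `x_iᵏ − x_iʳ` are
bounded by `σ_r` and `σ_k − σ_r` with total `σ_k`; both bounds must be attained, so coordinate
`i` is a translate of `±σ`. Conversely, coordinate `i` bounds `‖xʳ − xˡ‖_∞` from below by
`σ_r − σ_l`, and the polygon inequality with the step bounds gives the same upper bound.
-/

open Finset

theorem exists_dist_eq_dist_apply {ι : Type*} [Fintype ι] [Nonempty ι] {π : ι → Type*}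
    [∀ i, PseudoMetricSpace (π i)] (f g : ∀ i, π i) : ∃ i, dist f g = dist (f i) (g i) := by
  obtain ⟨i, -, hi⟩ := exists_mem_eq_sup univ univ_nonempty fun b => nndist (f b) (g b)
  exact ⟨i, by rw [dist_nndist, nndist_pi_def, hi, dist_nndist]⟩

theorem exists_eq_add_of_abs_sub_le {f σ : ℕ → ℝ} {k : ℕ}
    (hf : ∀ l r, l ≤ r → r ≤ k → |f r - f l| ≤ σ r - σ l) (hk : f k - f 0 = σ k - σ 0) :
    ∃ c, ∀ r ≤ k, f r = c + σ r := by
  refine ⟨f 0 - σ 0, fun r hr => ?_⟩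
  have h₁ := (abs_le.1 (hf 0 r r.zero_le hr)).2
  have h₂ := (abs_le.1 (hf r k hr le_rfl)).2
  linarith

section Baton

variable {ι : Type*} [Fintype ι] {x : ℕ → ι → ℝ} {σ : ℕ → ℝ} {k : ℕ}

theorem abs_sub_le_of_dist_eq (h : ∀ l r, l ≤ r → r ≤ k → dist (x r) (x l) = σ r - σ l)
    (j : ι) (l r : ℕ) (hlr : l ≤ r) (hrk : r ≤ k) : |x r j - x l j| ≤ σ r - σ l := by
  rw [← h l r hlr hrk, ← Real.dist_eq]
  exact dist_le_pi_dist (x r) (x l) j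

theorem exists_coord_translate_of_dist_eq [Nonempty ι]
    (h : ∀ l r, l ≤ r → r ≤ k → dist (x r) (x l) = σ r - σ l) :
    ∃ i, (∃ c, ∀ r ≤ k, x r i = c + σ r) ∨ (∃ c, ∀ r ≤ k, x r i = c - σ r) := by
  obtain ⟨i, hi⟩ := exists_dist_eq_dist_apply (x k) (x 0)
  rw [h 0 k k.zero_le le_rfl, Real.dist_eq] at hi
  refine ⟨i, (eq_or_eq_neg_of_abs_eq hi.symm).imp (fun hk => ?_) fun hk => ?_⟩
  · exact exists_eq_add_of_abs_sub_le (abs_sub_le_of_dist_eq h i) hk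
  · have hneg : ∀ l r, l ≤ r → r ≤ k → |-x r i - -x l i| ≤ σ r - σ l := fun l r hlr hrk => by
      simpa only [neg_sub_neg, abs_sub_comm] using abs_sub_le_of_dist_eq h i l r hlr hrk
    obtain ⟨c, hc⟩ := exists_eq_add_of_abs_sub_le hneg (by linarith)
    exact ⟨-c, fun r hr => by linarith [hc r hr]⟩

theorem dist_eq_of_coord_translate [Nonempty ι] {i : ι}
    (hi : (∃ c, ∀ r ≤ k, x r i = c + σ r) ∨ (∃ c, ∀ r ≤ k, x r i = c - σ r))
    (hstep : ∀ j, ∀ r < k, |x (r + 1) j - x r j| ≤ σ (r + 1) - σ r)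
    {l r : ℕ} (hlr : l ≤ r) (hrk : r ≤ k) : dist (x r) (x l) = σ r - σ l := by
  have hcoord : |x r i - x l i| = |σ r - σ l| := by
    rcases hi with ⟨c, hc⟩ | ⟨c, hc⟩ <;> rw [hc r hrk, hc l (hlr.trans hrk)]
    · congr 1; ring
    · rw [← abs_neg]; congr 1; ring
  have hupper : dist (x r) (x l) ≤ σ r - σ l :=
    calc dist (x r) (x l) = dist (x l) (x r) := dist_comm _ _
      _ ≤ ∑ m ∈ Ico l r, dist (x m) (x (m + 1)) := dist_le_Ico_sum_dist x hlr
      _ ≤ ∑ m ∈ Ico l r, (σ (m + 1) - σ m) := sum_le_sum fun m hm => by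
          rw [dist_comm, dist_pi_le_iff']
          exact fun j => (Real.dist_eq _ _).trans_le <|
            hstep j m ((mem_Ico.1 hm).2.trans_le hrk)
      _ = σ r - σ l := sum_Ico_sub σ hlr
  have hlower : |σ r - σ l| ≤ dist (x r) (x l) :=
    hcoord ▸ (Real.dist_eq _ _).symm.trans_le (dist_le_pi_dist (x r) (x l) i)
  exact le_antisymm hupper ((le_abs_self _).trans hlower)

end Baton

theorem baton_embed_iff_general (k n : ℕ) (hn : 0 < n) (lam : ℕ → ℝ) (x : ℕ → Fin n → ℝ) :
    (∀ l r : ℕ, l < r → r ≤ k →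
        dist (x r) (x l) = ∑ j ∈ Finset.range r, lam j - ∑ j ∈ Finset.range l, lam j)
    ↔ ((∃ i : Fin n,
          (∃ c : ℝ, ∀ r ≤ k, x r i = c + ∑ j ∈ Finset.range r, lam j) ∨
          (∃ c : ℝ, ∀ r ≤ k, x r i = c - ∑ j ∈ Finset.range r, lam j)) ∧
        ∀ j : Fin n, ∀ r < k, |x (r + 1) j - x r j| ≤ lam r) := by
  have : Nonempty (Fin n) := Fin.pos_iff_nonempty.mp hn
  have hlam (r : ℕ) : ∑ j ∈ range (r + 1), lam j - ∑ j ∈ range r, lam j = lam r :=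
    sum_range_succ_sub_sum lam
  constructor
  · intro h
    have h' : ∀ l r, l ≤ r → r ≤ k → dist (x r) (x l) =
        ∑ j ∈ range r, lam j - ∑ j ∈ range l, lam j := fun l r hlr hrk => by
      rcases hlr.eq_or_lt with rfl | hlt
      · simp
      · exact h l r hlt hrk
    refine ⟨exists_coord_translate_of_dist_eq h', fun j r hr => ?_⟩
    simpa only [hlam] using abs_sub_le_of_dist_eq h' j r (r + 1) r.le_succ hr
  · rintro ⟨⟨i, hi⟩, hstep⟩ l r hlr hrk
    exact dist_eq_of_coord_translate hi (fun j r hr => (hlam r).symm ▸ hstep j r hr) hlr.le hrk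

/-- A sequence `x⁰,…,xᵏ` in `ℝ^n` (max metric) is an isometric copy of the baton
`B(λ₁,…,λ_k)` in that order (i.e. `‖xʳ − xˡ‖_∞ = σ_r − σ_l` for all `l < r ≤ k`,
where `σ_r = λ₁ + ⋯ + λ_r`) if and only if (1) some coordinate sequence
`(x_i⁰,…,x_iᵏ)` is a translation of `(σ₀,…,σ_k)` or of `(−σ₀,…,−σ_k)`, and
(2) `|x_jʳ − x_j^{r−1}| ≤ λ_r` for all coordinates `j` and all `1 ≤ r ≤ k`. -/
theorem baton_embed_iff (k n : ℕ) (hk : 0 < k) (hn : 0 < n) (lam : ℕ → ℝ)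
    (hpos : ∀ j < k, 0 < lam j) (x : ℕ → Fin n → ℝ) :
    (∀ l r : ℕ, l < r → r ≤ k →
        dist (x r) (x l) = ∑ j ∈ Finset.range r, lam j - ∑ j ∈ Finset.range l, lam j)
    ↔ ((∃ i : Fin n,
          (∃ c : ℝ, ∀ r ≤ k, x r i = c + ∑ j ∈ Finset.range r, lam j) ∨
          (∃ c : ℝ, ∀ r ≤ k, x r i = c - ∑ j ∈ Finset.range r, lam j)) ∧
        ∀ j : Fin n, ∀ r < k, |x (r + 1) j - x r j| ≤ lam r) :=
  baton_embed_iff_general k n hn lam x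
end

section
/- Let k, n ∈ ℕ and let A ⊆ ℝ^n (with the max-norm metric). If A contains no isometric copy of any (k+1)-point baton B(λ_1,…,λ_k) (for any positive reals λ_1,…,λ_k), then |A| ≤ k^n. Moreover, this bound is tight: the set {1,…,k}^n has cardinality k^n and contains no isometric copy of any (k+1)-point baton. -/
open Set Filter

/-- The set `A` (in the metric space `β`) contains an isometric copy of the
metric (sub)space `M` (a subset of the metric space `α`). -/
def HasCopy {α β : Type*} [MetricSpace α] [MetricSpace β] (M : Set α) (A : Set β) : Prop :=
  ∃ f : α → β, (∀ x ∈ M, ∀ y ∈ M, dist (f x) (f y) = dist x y) ∧ f '' M ⊆ A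

/-- The baton `B(λ₁,…,λ_k)`: the set of partial sums `σ₀,…,σ_k` of `λ₁,…,λ_k`. -/
noncomputable def baton (lam : ℕ → ℝ) (k : ℕ) : Set ℝ :=
  (fun r => ∑ j ∈ Finset.range r, lam j) '' Set.Iic k

/-!
If `x ≠ y` in `ℝ^ι` with the max metric, some coordinate `i` realises `dist x y`, and then one of
the two points lies "above" the other along `i`. This relation is transitive, so a chain
`x₀, …, x_k` of such steps is an isometric copy of the baton with `λ_j = dist x_{j-1} x_j`. In a
baton-free set `A` every such chain therefore has fewer than `k` steps, and the heights
(lengths of the longest chains ending at `x`, one per coordinate) inject `A` into `{0,…,k-1}^ι`.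

Conversely, in an isometric copy of a baton the coordinate realising the distance between its two
ends is, by the triangle inequality, an isometry on the whole copy; so it takes `k + 1` distinct
values, while on `{1,…,k}^ι` each coordinate takes only `k`.
-/

def BatonFree {β : Type*} [MetricSpace β] (k : ℕ) (A : Set β) : Prop :=
  ∀ lam : ℕ → ℝ, (∀ j < k, 0 < lam j) → ¬ HasCopy (baton lam k) A

theorem hasCopy_image_of_dist_eq {ι α β : Type*} [Nonempty ι] [MetricSpace α] [MetricSpace β]
    {σ : ι → α} {p : ι → β} {s : Set ι} {A : Set β}
    (hdist : ∀ r ∈ s, ∀ t ∈ s, dist (p r) (p t) = dist (σ r) (σ t)) (hA : ∀ r ∈ s, p r ∈ A) :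
    HasCopy (σ '' s) A := by
  have hp : ∀ r ∈ s, p (Function.invFunOn σ s (σ r)) = p r := fun r hr =>
    dist_eq_zero.1 <| by
      rw [hdist _ (Function.invFunOn_mem ⟨r, hr, rfl⟩) r hr,
        Function.invFunOn_eq (f := σ) ⟨r, hr, rfl⟩, dist_self]
  refine ⟨p ∘ Function.invFunOn σ s, ?_, ?_⟩
  · rintro _ ⟨r, hr, rfl⟩ _ ⟨t, ht, rfl⟩
    rw [Function.comp_apply, Function.comp_apply, hp r hr, hp t ht, hdist r hr t ht]
  · rintro _ ⟨_, ⟨r, hr, rfl⟩, rfl⟩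
    rw [Function.comp_apply, hp r hr]
    exact hA r hr

theorem dist_eq_of_dist_le_of_dist_endpoints {β : Type*} [PseudoMetricSpace β] {g : ℝ → β}
    {s : Set ℝ} {a b : ℝ} (ha : a ∈ s) (hb : b ∈ s) (hs : s ⊆ Icc a b)
    (hg : ∀ x ∈ s, ∀ y ∈ s, dist (g x) (g y) ≤ dist x y) (hab : dist (g a) (g b) = dist a b) :
    ∀ x ∈ s, ∀ y ∈ s, dist (g x) (g y) = dist x y := by
  suffices h : ∀ x ∈ s, ∀ y ∈ s, x ≤ y → dist x y ≤ dist (g x) (g y) by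
    intro x hx y hy
    refine (hg x hx y hy).antisymm ?_
    rcases le_total x y with hxy | hyx
    · exact h x hx y hy hxy
    · rw [dist_comm x, dist_comm (g x)]
      exact h y hy x hx hyx
  intro x hx y hy hxy
  have hax := hg a ha x hx
  have hyb := hg y hy b hb
  have htri := dist_triangle4 (g a) (g x) (g y) (g b)
  obtain ⟨hax', -⟩ := hs hx
  obtain ⟨-, hyb'⟩ := hs hy
  rw [Real.dist_eq, abs_of_nonpos (by linarith)] at hax hyb
  rw [hab, Real.dist_eq, abs_of_nonpos (by linarith)] at htri
  rw [Real.dist_eq, abs_of_nonpos (by linarith)]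
  linarith

section Baton

variable {lam : ℕ → ℝ} {k : ℕ}

theorem strictMonoOn_sum_range (hlam : ∀ j < k, 0 < lam j) :
    StrictMonoOn (fun r => ∑ j ∈ Finset.range r, lam j) (Iic k) := fun r _ s hs hrs =>
  Finset.sum_lt_sum_of_subset (Finset.range_subset_range.2 hrs.le) (Finset.mem_range.2 hrs)
    (by simp) (hlam r (hrs.trans_le hs)) fun j hj _ =>
      (hlam j ((Finset.mem_range.1 hj).trans_le hs)).le

theorem encard_baton (hlam : ∀ j < k, 0 < lam j) : (baton lam k).encard = k + 1 := by
  rw [baton, (strictMonoOn_sum_range hlam).injOn.encard_image, ← (finite_Iic k).cast_ncard_eq,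
    ncard_Iic_nat, Nat.cast_succ]

theorem baton_subset_Icc (hlam : ∀ j < k, 0 < lam j) :
    baton lam k ⊆ Icc 0 (∑ j ∈ Finset.range k, lam j) := by
  rintro _ ⟨r, hr, rfl⟩
  have hmono := (strictMonoOn_sum_range hlam).monotoneOn
  exact ⟨by simpa using hmono (Nat.zero_le k) hr (Nat.zero_le r), hmono hr (le_refl k) hr⟩

end Baton

section UpperBound

variable {ι : Type*} [Fintype ι]

def DistAttainedUp (i : ι) (x y : ι → ℝ) : Prop :=
  x i < y i ∧ dist x y = y i - x i

theorem DistAttainedUp.trans {i : ι} {x y z : ι → ℝ} (hxy : DistAttainedUp i x y)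
    (hyz : DistAttainedUp i y z) : DistAttainedUp i x z := by
  refine ⟨hxy.1.trans hyz.1, le_antisymm ?_ ?_⟩
  · linarith [dist_triangle x y z, hxy.2, hyz.2]
  · have := dist_le_pi_dist x z i
    rw [Real.dist_eq] at this
    linarith [neg_abs_le (x i - z i)]

theorem exists_distAttainedUp_of_ne {x y : ι → ℝ} (h : x ≠ y) :
    ∃ i, DistAttainedUp i x y ∨ DistAttainedUp i y x := by
  obtain ⟨i, hi⟩ := ((dist_pi_eq_iff (dist_pos.2 h)).1 rfl).1
  rw [Real.dist_eq] at hi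
  refine ⟨i, (lt_or_gt_of_ne fun hxy => ?_).imp (fun hlt => ⟨hlt, ?_⟩) fun hlt => ⟨hlt, ?_⟩⟩
  · rw [hxy, sub_self, abs_zero, eq_comm, dist_eq_zero] at hi
    exact h hi
  · rw [← hi, abs_sub_comm, abs_of_pos (sub_pos.2 hlt)]
  · rw [dist_comm, ← hi, abs_of_pos (sub_pos.2 hlt)]

def IsUpChain (A : Set (ι → ℝ)) (i : ι) (c : ℕ → ι → ℝ) (m : ℕ) : Prop :=
  (∀ j ≤ m, c j ∈ A) ∧ ∀ j < m, DistAttainedUp i (c j) (c (j + 1))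

variable {A : Set (ι → ℝ)} {i : ι} {c : ℕ → ι → ℝ} {m k : ℕ} {x y : ι → ℝ}

theorem IsUpChain.distAttainedUp (hc : IsUpChain A i c m) {r s : ℕ} (hrs : r < s) (hs : s ≤ m) :
    DistAttainedUp i (c r) (c s) := by
  induction s, hrs using Nat.le_induction with
  | base => exact hc.2 r hs
  | succ s hrs ih => exact (ih (by omega)).trans (hc.2 s hs)

theorem IsUpChain.snoc (hc : IsUpChain A i c m) (hy : y ∈ A)
    (h : DistAttainedUp i (c m) y) : IsUpChain A i (fun j => if j ≤ m then c j else y) (m + 1) := by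
  refine ⟨fun j hj => ?_, fun j hj => ?_⟩
  · dsimp only
    split_ifs with hjm
    · exact hc.1 j hjm
    · exact hy
  · rcases (Nat.lt_succ_iff.1 hj).lt_or_eq with hjm | rfl
    · simpa [hjm.le, Nat.succ_le_of_lt hjm] using hc.2 j hjm
    · simpa using h

theorem IsUpChain.not_batonFree (hc : IsUpChain A i c k) : ¬ BatonFree k A := by
  intro hA
  refine hA (fun j => c (j + 1) i - c j i) (fun j hj => sub_pos.2 (hc.2 j hj).1) ?_
  have hσ : ∀ r, ∑ j ∈ Finset.range r, (c (j + 1) i - c j i) = c r i - c 0 i :=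
    Finset.sum_range_sub (fun j => c j i)
  refine hasCopy_image_of_dist_eq (fun r hr s hs => ?_) hc.1
  rw [hσ, hσ, Real.dist_eq, sub_sub_sub_cancel_right]
  rcases lt_trichotomy r s with hrs | rfl | hsr
  · obtain ⟨hlt, hdist⟩ := hc.distAttainedUp hrs hs
    rw [hdist, abs_sub_comm, abs_of_pos (sub_pos.2 hlt)]
  · simp
  · obtain ⟨hlt, hdist⟩ := hc.distAttainedUp hsr hr
    rw [dist_comm, hdist, abs_of_pos (sub_pos.2 hlt)]

open Classical

noncomputable def upHeight (A : Set (ι → ℝ)) (i : ι) (k : ℕ) (x : ι → ℝ) : ℕ :=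
  Nat.findGreatest (fun m => ∃ c, IsUpChain A i c m ∧ c m = x) k

theorem exists_isUpChain_upHeight (hx : x ∈ A) :
    ∃ c, IsUpChain A i c (upHeight A i k x) ∧ c (upHeight A i k x) = x :=
  Nat.findGreatest_spec (P := fun m => ∃ c, IsUpChain A i c m ∧ c m = x) (Nat.zero_le k)
    ⟨fun _ => x, ⟨fun _ _ => hx, fun _ hj => absurd hj (Nat.not_lt_zero _)⟩, rfl⟩

theorem upHeight_lt (hA : BatonFree k A) (hx : x ∈ A) : upHeight A i k x < k := by
  obtain ⟨c, hc, -⟩ := exists_isUpChain_upHeight (k := k) hx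
  refine Nat.findGreatest_le k |>.lt_of_ne fun h => ?_
  rw [upHeight, h] at hc
  exact hc.not_batonFree hA

theorem upHeight_lt_upHeight (hA : BatonFree k A) (hx : x ∈ A) (hy : y ∈ A)
    (hxy : DistAttainedUp i x y) : upHeight A i k x < upHeight A i k y := by
  obtain ⟨c, hc, hcx⟩ := exists_isUpChain_upHeight (i := i) (k := k) hx
  rw [← hcx] at hxy
  exact Nat.le_findGreatest (upHeight_lt hA hx) ⟨_, hc.snoc hy hxy, by simp⟩

theorem BatonFree.finite_and_ncard_le (hA : BatonFree k A) :
    A.Finite ∧ A.ncard ≤ k ^ Fintype.card ι := by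
  let F : A → ι → Fin k := fun x i => ⟨upHeight A i k x, upHeight_lt hA x.2⟩
  have hF : Function.Injective F := by
    intro x y hxy
    by_contra hne
    obtain ⟨i, h | h⟩ := exists_distAttainedUp_of_ne (Subtype.coe_injective.ne hne)
    · exact (upHeight_lt_upHeight hA x.2 y.2 h).ne (congrArg Fin.val (congrFun hxy i))
    · exact (upHeight_lt_upHeight hA y.2 x.2 h).ne' (congrArg Fin.val (congrFun hxy i))
  have : Finite A := Finite.of_injective F hF
  refine ⟨A.toFinite, ?_⟩
  calc A.ncard = Nat.card A := (Nat.card_coe_set_eq A).symm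
    _ ≤ Nat.card (ι → Fin k) := Nat.card_le_card_of_injective F hF
    _ = k ^ Fintype.card ι := by rw [Nat.card_fun, Nat.card_fin, Nat.card_eq_fintype_card]

end UpperBound

section Grid

variable {ι : Type*} [Fintype ι] {k : ℕ}

theorem exists_coord_encard_image_ge_of_hasCopy_baton {lam : ℕ → ℝ} {S : Set (ι → ℝ)}
    (hk : 0 < k) (hlam : ∀ j < k, 0 < lam j) (h : HasCopy (baton lam k) S) :
    ∃ i, (k + 1 : ℕ∞) ≤ ((fun x => x i) '' S).encard := by
  obtain ⟨f, hf, hfS⟩ := h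
  set L := ∑ j ∈ Finset.range k, lam j
  have h0 : (0 : ℝ) ∈ baton lam k := ⟨0, Nat.zero_le k, Finset.sum_range_zero lam⟩
  have hL : L ∈ baton lam k := ⟨k, le_refl k, rfl⟩
  have hLpos : 0 < L :=
    Finset.sum_pos (fun j hj => hlam j (Finset.mem_range.1 hj)) (Finset.nonempty_range_iff.2 hk.ne')
  have hne : f 0 ≠ f L := by
    rw [← dist_pos, hf 0 h0 L hL, dist_comm, Real.dist_eq, sub_zero, abs_of_pos hLpos]
    exact hLpos
  obtain ⟨i, hi⟩ := ((dist_pi_eq_iff (dist_pos.2 hne)).1 rfl).1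
  have hiso := dist_eq_of_dist_le_of_dist_endpoints (g := fun t => f t i) h0 hL
    (baton_subset_Icc hlam) (fun x hx y hy => (dist_le_pi_dist _ _ i).trans_eq (hf x hx y hy))
    (hi.trans (hf 0 h0 L hL))
  have hinj : InjOn (fun t => f t i) (baton lam k) := fun x hx y hy hxy =>
    dist_eq_zero.1 <| by rw [← hiso x hx y hy]; exact dist_eq_zero.2 hxy
  refine ⟨i, ?_⟩
  calc (k + 1 : ℕ∞) = ((fun t => f t i) '' baton lam k).encard := by
        rw [hinj.encard_image, encard_baton hlam]
    _ ≤ ((fun x => x i) '' S).encard := by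
        rw [← image_image (fun x => x i) f]
        exact encard_le_encard (image_mono hfS)

def grid (k : ℕ) (ι : Type*) : Set (ι → ℝ) :=
  {x | ∀ i, ∃ j : ℕ, 1 ≤ j ∧ j ≤ k ∧ x i = (j : ℝ)}

theorem ncard_grid : (grid k ι).ncard = k ^ Fintype.card ι := by
  have hrange : grid k ι = range fun (v : ι → Fin k) i => ((v i : ℕ) + 1 : ℝ) := by
    ext x
    refine ⟨fun hx => ?_, ?_⟩
    · choose j hj1 hjk hxj using hx
      refine ⟨fun i => ⟨j i - 1, by have := hj1 i; have := hjk i; omega⟩, funext fun i => ?_⟩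
      dsimp only
      rw [hxj, Nat.cast_sub (hj1 i), Nat.cast_one, sub_add_cancel]
    · rintro ⟨v, rfl⟩ i
      exact ⟨v i + 1, by omega, (v i).2, by push_cast; rfl⟩
  have hinj : Function.Injective fun (v : ι → Fin k) i => ((v i : ℕ) + 1 : ℝ) :=
    fun v w hvw => funext fun i => Fin.ext <| by simpa using congrFun hvw i
  rw [hrange, ncard_range_of_injective hinj, Nat.card_fun, Nat.card_fin, Nat.card_eq_fintype_card]

theorem grid_batonFree (hk : 0 < k) : BatonFree k (grid k ι) := by
  intro lam hlam hcopy
  obtain ⟨i, hi⟩ := exists_coord_encard_image_ge_of_hasCopy_baton hk hlam hcopy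
  have hsub : (fun x => x i) '' grid k ι ⊆ (Nat.cast '' Icc 1 k : Set ℝ) := by
    rintro _ ⟨x, hx, rfl⟩
    obtain ⟨j, hj1, hjk, hxj⟩ := hx i
    exact ⟨j, ⟨hj1, hjk⟩, hxj.symm⟩
  have hcard : (Nat.cast '' Icc 1 k : Set ℝ).encard ≤ k := by
    refine (encard_image_le _ _).trans_eq ?_
    rw [← (finite_Icc 1 k).cast_ncard_eq, ncard_Icc_nat, Nat.add_sub_cancel]
  have := hi.trans ((encard_le_encard hsub).trans hcard)
  norm_cast at this
  omega

end Grid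

theorem no_long_baton_card_general (k n : ℕ) (hk : 0 < k) :
    (∀ A : Set (Fin n → ℝ),
      (∀ lam : ℕ → ℝ, (∀ j < k, 0 < lam j) → ¬ HasCopy (baton lam k) A) →
      A.Finite ∧ A.ncard ≤ k ^ n) ∧
    ({x : Fin n → ℝ | ∀ i, ∃ j : ℕ, 1 ≤ j ∧ j ≤ k ∧ x i = (j : ℝ)}.ncard = k ^ n ∧
      ∀ lam : ℕ → ℝ, (∀ j < k, 0 < lam j) →
        ¬ HasCopy (baton lam k)
            {x : Fin n → ℝ | ∀ i, ∃ j : ℕ, 1 ≤ j ∧ j ≤ k ∧ x i = (j : ℝ)}) := by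
  refine ⟨fun A hA => ?_, ?_, grid_batonFree hk⟩
  · simpa using BatonFree.finite_and_ncard_le hA
  · have h := ncard_grid (k := k) (ι := Fin n)
    rw [Fintype.card_fin] at h
    exact h

/-- If `A ⊆ ℝ^n` (max metric) contains no isometric copy of any `(k+1)`-point baton,
then `|A| ≤ k^n`; moreover this bound is tight, as witnessed by `{1,…,k}^n`. -/
theorem no_long_baton_card (k n : ℕ) (hk : 0 < k) (hn : 0 < n) :
    (∀ A : Set (Fin n → ℝ),
      (∀ lam : ℕ → ℝ, (∀ j < k, 0 < lam j) → ¬ HasCopy (baton lam k) A) →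
      A.Finite ∧ A.ncard ≤ k ^ n) ∧
    ({x : Fin n → ℝ | ∀ i, ∃ j : ℕ, 1 ≤ j ∧ j ≤ k ∧ x i = (j : ℝ)}.ncard = k ^ n ∧
      ∀ lam : ℕ → ℝ, (∀ j < k, 0 < lam j) →
        ¬ HasCopy (baton lam k)
            {x : Fin n → ℝ | ∀ i, ∃ j : ℕ, 1 ≤ j ∧ j ≤ k ∧ x i = (j : ℝ)}) :=
  no_long_baton_card_general k n hk
end
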